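/- arXiv:1407.2504 — 2 statements merged into one kernel-verified Lean document; each statement's English description precedes it below -/
import Mathlib

section
/- Let (K,d) be a compact metric space, T' > 0, let u : [0,T']×K → ℝ be bounded upper semicontinuous, v : [0,T']×K → ℝ bounded lower semicontinuous, and σ : K×K → [0,∞) continuous. For ε > 0 let (t_ε,x_ε,y_ε) be a maximum point over [0,T']×K×K of Φ_ε(t,x,y) = u(t,x) − v(t,y) − σ(x,y) − d(x,y)²/(2ε). Assume in addition that there exists a maximum point (t₀,x₀) of (t,x) ↦ u(t,x) − v(t,x) over [0,T']×K with σ(x₀,x₀) = 0. Then every limit point (t̂,x̂,ŷ) of the maximizers (t_ε,x_ε,y_ε) as ε → 0 satisfies x̂ = ŷ, σ(x̂,x̂) = 0, and u(t̂,x̂) − v(t̂,x̂) = max over [0,T']×K of (u − v). In particular x̂ belongs to the set {x ∈ K : σ(x,x) = 0}. -/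
/-!
Comparing `Φ_ε` at its maximizer with its value at `(t₀, x₀, x₀)`, which is `M₀ = max (u - v)`,
bounds `d(x_ε, y_ε)²` by `O(ε)`, so limit points lie on the diagonal. Dropping the penalty,
`M₀ ≤ Ψ(t_ε, x_ε, y_ε)` for the upper semicontinuous `Ψ(t,x,y) = u(t,x) - v(t,y) - σ(x,y)`, so in the
limit `M₀ ≤ Ψ(t̂, x̂, x̂) = (u - v)(t̂, x̂) - σ(x̂, x̂) ≤ M₀ - σ(x̂, x̂)`, which forces `σ(x̂, x̂) = 0`
and `(u - v)(t̂, x̂) = M₀`.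
-/

open Set Filter Topology

/-- The penalized functional `Φ_ε(t,x,y) = u(t,x) - v(t,y) - σ(x,y) - d(x,y)²/(2ε)`. -/
noncomputable def Phi {K : Type*} [MetricSpace K] (u v : ℝ × K → ℝ) (σ : K × K → ℝ)
    (ε : ℝ) (q : ℝ × K × K) : ℝ :=
  u (q.1, q.2.1) - v (q.1, q.2.2) - σ (q.2.1, q.2.2) - dist q.2.1 q.2.2 ^ 2 / (2 * ε)

theorem UpperSemicontinuousWithinAt.le_of_tendsto {α γ ι : Type*} [TopologicalSpace α]
    [LinearOrder γ] {f : α → γ} {s : Set α} {x : α} (hf : UpperSemicontinuousWithinAt f s x)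
    {l : Filter ι} [l.NeBot] {z : ι → α} (hz : Tendsto z l (𝓝[s] x)) {c : γ}
    (hc : ∀ᶠ i in l, c ≤ f (z i)) : c ≤ f x := by
  by_contra! h
  obtain ⟨i, hlt, hle⟩ := ((hz.eventually (hf c h)).and hc).exists
  exact hlt.not_ge hle

theorem eq_of_tendsto_of_dist_sq_le {X ι : Type*} [MetricSpace X] {l : Filter ι} [l.NeBot]
    {x y : ι → X} {a b : X} {δ : ι → ℝ} (hx : Tendsto x l (𝓝 a)) (hy : Tendsto y l (𝓝 b))
    (hδ : Tendsto δ l (𝓝 0)) (h : ∀ i, dist (x i) (y i) ^ 2 ≤ δ i) : a = b := by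
  have := tendsto_nhds_unique ((hx.dist hy).pow 2) (squeeze_zero (fun _ => sq_nonneg _) h hδ)
  simpa using this

section Penalization

variable {K : Type*} (u v : ℝ × K → ℝ) (σ : K × K → ℝ)

def Psi (q : ℝ × K × K) : ℝ := u (q.1, q.2.1) - v (q.1, q.2.2) - σ (q.2.1, q.2.2)

variable {u v σ}

theorem upperSemicontinuousOn_Psi [TopologicalSpace K] {s : Set ℝ}
    (hu : UpperSemicontinuousOn u (s ×ˢ univ)) (hv : LowerSemicontinuousOn v (s ×ˢ univ))
    (hσ : Continuous σ) : UpperSemicontinuousOn (Psi u v σ) (s ×ˢ univ) := by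
  have hx : UpperSemicontinuousOn (fun q : ℝ × K × K => u (q.1, q.2.1)) (s ×ˢ univ) :=
    hu.comp (by fun_prop) fun q hq => ⟨hq.1, trivial⟩
  have hy : UpperSemicontinuousOn (fun q : ℝ × K × K => -v (q.1, q.2.2)) (s ×ˢ univ) :=
    continuous_neg.comp_lowerSemicontinuousOn_antitone
      (hv.comp (by fun_prop) fun q hq => ⟨hq.1, trivial⟩) fun _ _ h => neg_le_neg h
  have hxy : UpperSemicontinuousOn (fun q : ℝ × K × K => -σ (q.2.1, q.2.2)) (s ×ˢ univ) :=
    ContinuousOn.upperSemicontinuousOn (by fun_prop)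
  have hPsi : Psi u v σ = fun q => u (q.1, q.2.1) + -v (q.1, q.2.2) + -σ (q.2.1, q.2.2) :=
    funext fun q => by simp only [Psi, sub_eq_add_neg]
  exact hPsi ▸ (hx.add hy).add hxy

theorem Psi_le_of_abs_le {C : ℝ} (hu : ∀ p, |u p| ≤ C) (hv : ∀ p, |v p| ≤ C)
    (hσ : ∀ p, 0 ≤ σ p) (q : ℝ × K × K) : Psi u v σ q ≤ 2 * C := by
  have := abs_le.1 (hu (q.1, q.2.1))
  have := abs_le.1 (hv (q.1, q.2.2))
  have := hσ (q.2.1, q.2.2)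
  simp only [Psi]
  linarith

variable [MetricSpace K]

theorem Phi_eq_Psi_sub (ε : ℝ) (q : ℝ × K × K) :
    Phi u v σ ε q = Psi u v σ q - dist q.2.1 q.2.2 ^ 2 / (2 * ε) := rfl

theorem Phi_diag (ε t : ℝ) (x : K) : Phi u v σ ε (t, x, x) = u (t, x) - v (t, x) - σ (x, x) := by
  simp [Phi]

theorem Phi_le_Psi {ε : ℝ} (hε : 0 < ε) (q : ℝ × K × K) : Phi u v σ ε q ≤ Psi u v σ q := by
  rw [Phi_eq_Psi_sub]
  have : 0 ≤ dist q.2.1 q.2.2 ^ 2 / (2 * ε) := by positivity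
  linarith

theorem dist_sq_le_of_le_Phi {ε M C : ℝ} {q : ℝ × K × K} (hε : 0 < ε)
    (hM : M ≤ Phi u v σ ε q) (hC : Psi u v σ q ≤ C) :
    dist q.2.1 q.2.2 ^ 2 ≤ 2 * ε * (C - M) := by
  rw [Phi_eq_Psi_sub] at hM
  rw [← div_le_iff₀' (by positivity)]
  linarith

end Penalization

theorem stmt_2_general {K : Type*} [MetricSpace K]
    (T' : ℝ)
    (u v : ℝ × K → ℝ)
    (hu : UpperSemicontinuousOn u (Icc 0 T' ×ˢ (univ : Set K)))
    (hv : LowerSemicontinuousOn v (Icc 0 T' ×ˢ (univ : Set K)))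
    (Cb : ℝ) (hub : ∀ p, |u p| ≤ Cb) (hvb : ∀ p, |v p| ≤ Cb)
    (σ : K × K → ℝ) (hσc : Continuous σ) (hσ0 : ∀ p, 0 ≤ σ p)
    (p : ℝ → ℝ × K × K)
    (hpmem : ∀ ε > 0, (p ε).1 ∈ Icc (0 : ℝ) T')
    (hpmax : ∀ ε > 0, ∀ q : ℝ × K × K, q.1 ∈ Icc (0 : ℝ) T' →
      Phi u v σ ε q ≤ Phi u v σ ε (p ε))
    (t₀ : ℝ) (x₀ : K) (ht₀ : t₀ ∈ Icc (0 : ℝ) T')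
    (hmax : ∀ t ∈ Icc (0 : ℝ) T', ∀ x : K,
      u (t, x) - v (t, x) ≤ u (t₀, x₀) - v (t₀, x₀))
    (hσx₀ : σ (x₀, x₀) = 0) :
    ∀ εj : ℕ → ℝ, (∀ j, 0 < εj j) → Tendsto εj atTop (𝓝 0) →
      ∀ q : ℝ × K × K, Tendsto (fun j => p (εj j)) atTop (𝓝 q) →
        q.2.1 = q.2.2 ∧ σ (q.2.1, q.2.1) = 0 ∧
          u (q.1, q.2.1) - v (q.1, q.2.1) = u (t₀, x₀) - v (t₀, x₀) ∧
          q.2.1 ∈ {x : K | σ (x, x) = 0} := by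
  intro εj hεj hεlim q hlim
  set M₀ := u (t₀, x₀) - v (t₀, x₀)
  have hmem : ∀ j, p (εj j) ∈ Icc 0 T' ×ˢ (univ : Set (K × K)) :=
    fun j => ⟨hpmem _ (hεj j), trivial⟩
  have hM₀ : ∀ j, M₀ ≤ Phi u v σ (εj j) (p (εj j)) := fun j => by
    simpa only [Phi_diag, hσx₀, sub_zero] using hpmax _ (hεj j) (t₀, x₀, x₀) ht₀
  have hdiag : q.2.1 = q.2.2 :=
    eq_of_tendsto_of_dist_sq_le hlim.snd_nhds.fst_nhds hlim.snd_nhds.snd_nhds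
      (by simpa using (hεlim.const_mul 2).mul_const (2 * Cb - M₀))
      fun j => dist_sq_le_of_le_Phi (hεj j) (hM₀ j) (Psi_le_of_abs_le hub hvb hσ0 _)
  have hq : q ∈ Icc 0 T' ×ˢ (univ : Set (K × K)) :=
    (isClosed_Icc.prod isClosed_univ).mem_of_tendsto hlim (Eventually.of_forall hmem)
  have hPsi : M₀ ≤ Psi u v σ q :=
    UpperSemicontinuousWithinAt.le_of_tendsto (upperSemicontinuousOn_Psi hu hv hσc q hq)
      (tendsto_nhdsWithin_iff.2 ⟨hlim, Eventually.of_forall hmem⟩)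
      (Eventually.of_forall fun j => (hM₀ j).trans (Phi_le_Psi (hεj j) _))
  obtain ⟨t, x, y⟩ := q
  obtain rfl : x = y := hdiag
  have := hmax t hq.1 x
  have := hσ0 (x, x)
  simp only [Psi] at hPsi
  have hσx : σ (x, x) = 0 := by linarith
  exact ⟨rfl, hσx, by linarith, hσx⟩

/-- Second part of the penalization lemma: if `(t₀,x₀)` maximizes `u - v` on
`[0,T'] × K` and `σ(x₀,x₀) = 0`, then every limit point `(t̂,x̂,ŷ)` of the
penalized maximizers as `ε → 0` satisfies `x̂ = ŷ`, `σ(x̂,x̂) = 0`, and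
`u(t̂,x̂) - v(t̂,x̂)` equals the maximum of `u - v`; in particular `x̂` lies in
`{x : σ(x,x) = 0}`. -/
theorem stmt_2 {K : Type*} [MetricSpace K] [CompactSpace K]
    (T' : ℝ) (hT' : 0 < T')
    (u v : ℝ × K → ℝ)
    (hu : UpperSemicontinuousOn u (Icc 0 T' ×ˢ (univ : Set K)))
    (hv : LowerSemicontinuousOn v (Icc 0 T' ×ˢ (univ : Set K)))
    (Cb : ℝ) (hub : ∀ p, |u p| ≤ Cb) (hvb : ∀ p, |v p| ≤ Cb)
    (σ : K × K → ℝ) (hσc : Continuous σ) (hσ0 : ∀ p, 0 ≤ σ p)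
    (p : ℝ → ℝ × K × K)
    (hpmem : ∀ ε > 0, (p ε).1 ∈ Icc (0 : ℝ) T')
    (hpmax : ∀ ε > 0, ∀ q : ℝ × K × K, q.1 ∈ Icc (0 : ℝ) T' →
      Phi u v σ ε q ≤ Phi u v σ ε (p ε))
    (t₀ : ℝ) (x₀ : K) (ht₀ : t₀ ∈ Icc (0 : ℝ) T')
    (hmax : ∀ t ∈ Icc (0 : ℝ) T', ∀ x : K,
      u (t, x) - v (t, x) ≤ u (t₀, x₀) - v (t₀, x₀))
    (hσx₀ : σ (x₀, x₀) = 0) :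
    ∀ εj : ℕ → ℝ, (∀ j, 0 < εj j) → Tendsto εj atTop (𝓝 0) →
      ∀ q : ℝ × K × K, Tendsto (fun j => p (εj j)) atTop (𝓝 q) →
        q.2.1 = q.2.2 ∧ σ (q.2.1, q.2.1) = 0 ∧
          u (q.1, q.2.1) - v (q.1, q.2.1) = u (t₀, x₀) - v (t₀, x₀) ∧
          q.2.1 ∈ {x : K | σ (x, x) = 0} :=
  stmt_2_general T' u v hu hv Cb hub hvb σ hσc hσ0 p hpmem hpmax t₀ x₀ ht₀ hmax hσx₀
end

section
/- Let n ≥ 1 and let A, B be n×n Hermitian matrices. Let δ > 0, 0 ≤ η < δ and Λ > 0 and assume A ≥ δ·I and A ≤ B + η·I. Then B ≥ (δ−η)·I (in particular B is positive definite) and det A ≤ det(B + η·I). If moreover B ≤ Λ·I, then det(B + η·I) ≤ det B + n·η·(Λ+η)^{n−1}, and hence det A ≤ det B + n·η·(Λ+η)^{n−1}. -/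
open Matrix
open scoped ComplexOrder

/-!
For `0 < A ≤ M`, put `C = A^{-1/2} (M - A) A^{-1/2} ≥ 0`; then `M = A^{1/2} (1 + C) A^{1/2}`,
so `det M = det A · ∏ (1 + cᵢ) ≥ det A` over the eigenvalues `cᵢ ≥ 0` of `C`.
If `B` has eigenvalues `μᵢ ∈ [0, Λ]`, then `det (B + η) = ∏ (μᵢ + η)`, and expanding the product
one factor at a time bounds its excess over `det B = ∏ μᵢ` by `n η (Λ + η)ⁿ⁻¹`.
-/

open Finset in
theorem Finset.prod_add_le_prod_add_card_mul {ι R : Type*} [CommSemiring R] [PartialOrder R]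
    [IsOrderedRing R] (s : Finset ι) {μ : ι → R} {Λ η : R} (hμ0 : ∀ i ∈ s, 0 ≤ μ i)
    (hμΛ : ∀ i ∈ s, μ i ≤ Λ) (hη : 0 ≤ η) :
    ∏ i ∈ s, (μ i + η) ≤ ∏ i ∈ s, μ i + #s * η * (Λ + η) ^ (#s - 1) := by
  classical
  induction s using Finset.induction_on with
  | empty => simp
  | @insert a s ha ih =>
    simp only [mem_insert, forall_eq_or_imp] at hμ0 hμΛ
    have hΛ : 0 ≤ Λ := hμ0.1.trans hμΛ.1
    have hprod : ∏ i ∈ s, (μ i + η) ≤ (Λ + η) ^ #s := by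
      rw [← prod_const]
      exact prod_le_prod (fun i hi => add_nonneg (hμ0.2 i hi) hη)
        fun i hi => by gcongr; exact hμΛ.2 i hi
    have hpow : (#s : R) * Λ * (Λ + η) ^ (#s - 1) ≤ #s * (Λ + η) ^ #s := by
      cases hs : #s with
      | zero => simp
      | succ m =>
        rw [Nat.add_sub_cancel, pow_succ, mul_right_comm, mul_assoc]
        gcongr
        exact le_add_of_nonneg_right hη
    rw [prod_insert ha, prod_insert ha, card_insert_of_notMem ha, Nat.add_sub_cancel]
    calc (μ a + η) * ∏ i ∈ s, (μ i + η)
        = μ a * ∏ i ∈ s, (μ i + η) + η * ∏ i ∈ s, (μ i + η) := add_mul _ _ _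
      _ ≤ μ a * (∏ i ∈ s, μ i + #s * η * (Λ + η) ^ (#s - 1)) + η * (Λ + η) ^ #s := by
          gcongr
          · exact hμ0.1
          · exact ih hμ0.2 hμΛ.2
      _ = μ a * ∏ i ∈ s, μ i + η * (#s * μ a * (Λ + η) ^ (#s - 1)) + η * (Λ + η) ^ #s := by
          ring
      _ ≤ μ a * ∏ i ∈ s, μ i + η * (#s * Λ * (Λ + η) ^ (#s - 1)) + η * (Λ + η) ^ #s := by
          gcongr
          exact hμΛ.1
      _ ≤ μ a * ∏ i ∈ s, μ i + η * (#s * (Λ + η) ^ #s) + η * (Λ + η) ^ #s := by gcongr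
      _ = μ a * ∏ i ∈ s, μ i + ↑(#s + 1) * η * (Λ + η) ^ #s := by push_cast; ring

namespace Matrix

open scoped MatrixOrder

variable {𝕜 : Type*} [RCLike 𝕜] {n : Type*}

lemma PosDef.of_le {A B : Matrix n n 𝕜} (hA : A.PosDef) (hAB : A ≤ B) : B.PosDef := by
  simpa using hA.add_posSemidef (le_iff.mp hAB)

variable [DecidableEq n]

lemma posDef_smul_one {c : ℝ} (hc : 0 < c) : ((c : 𝕜) • (1 : Matrix n n 𝕜)).PosDef := by
  rw [← RCLike.real_smul_eq_coe_smul]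
  exact PosDef.one.smul hc

variable [Fintype n]

lemma algebraMap_real_eq_smul_one (c : ℝ) :
    algebraMap ℝ (Matrix n n 𝕜) c = (c : 𝕜) • (1 : Matrix n n 𝕜) := by
  rw [Algebra.algebraMap_eq_smul_one, RCLike.real_smul_eq_coe_smul (K := 𝕜)]

lemma IsHermitian.det_cfc {A : Matrix n n 𝕜} (hA : A.IsHermitian) (f : ℝ → ℝ) :
    (cfc f A).det = ∏ i, (f (hA.eigenvalues i) : 𝕜) := by
  simp [hA.cfc_eq, IsHermitian.cfc, -Unitary.conjStarAlgAut_apply]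

lemma IsHermitian.det_add_smul_one {A : Matrix n n 𝕜} (hA : A.IsHermitian) (c : ℝ) :
    (A + (c : 𝕜) • 1).det = ∏ i, ((hA.eigenvalues i + c : ℝ) : 𝕜) := by
  rw [← hA.det_cfc (· + c), cfc_add_const c (fun x => x) A, cfc_id' ℝ A,
    algebraMap_real_eq_smul_one]

lemma IsHermitian.eigenvalues_le_of_le_smul_one {A : Matrix n n 𝕜} (hA : A.IsHermitian) {c : ℝ}
    (h : A ≤ (c : 𝕜) • 1) (i : n) : hA.eigenvalues i ≤ c := by
  rw [← algebraMap_real_eq_smul_one, le_algebraMap_iff_spectrum_le hA.isSelfAdjoint] at h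
  exact h _ (hA.eigenvalues_mem_spectrum_real i)

lemma PosSemidef.one_le_det_one_add {C : Matrix n n 𝕜} (hC : C.PosSemidef) :
    1 ≤ (1 + C).det := by
  have h := hC.1.det_add_smul_one 1
  rw [RCLike.ofReal_one, one_smul, add_comm, ← RCLike.ofReal_prod] at h
  rw [h, ← RCLike.ofReal_one, RCLike.ofReal_le_ofReal]
  exact Finset.one_le_prod fun i _ => by linarith [hC.eigenvalues_nonneg i]

lemma PosDef.det_le_det_of_le {A B : Matrix n n 𝕜} (hA : A.PosDef) (hAB : A ≤ B) :
    A.det ≤ B.det := by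
  set P := CFC.sqrt A
  have hPP : P * P = A := CFC.sqrt_mul_sqrt_self A hA.posSemidef.nonneg
  have hPH : P.IsHermitian := (nonneg_iff_posSemidef.mp (CFC.sqrt_nonneg A)).1
  have hPunit : IsUnit P.det := by
    refine isUnit_iff_ne_zero.mpr fun h0 => hA.det_pos.ne' ?_
    rw [← hPP, det_mul, h0, zero_mul]
  set C := P⁻¹ * (B - A) * P⁻¹
  have hC : C.PosSemidef := by
    simpa only [hPH.inv.eq] using (le_iff.mp hAB).mul_mul_conjTranspose_same P⁻¹
  have hfactor : B = P * (1 + C) * P := by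
    simp only [C, mul_add, add_mul, mul_one, ← mul_assoc, mul_nonsing_inv P hPunit, one_mul, hPP]
    rw [mul_assoc, nonsing_inv_mul P hPunit, mul_one]
    abel
  have hdetB : B.det = A.det * (1 + C).det := by
    rw [hfactor, ← hPP, det_mul, det_mul, det_mul]
    ring
  rw [hdetB]
  exact le_mul_of_one_le_right hA.det_pos.le hC.one_le_det_one_add

lemma PosSemidef.det_add_smul_one_le {B : Matrix n n 𝕜} (hB : B.PosSemidef) {Λ η : ℝ}
    (hBΛ : B ≤ (Λ : 𝕜) • 1) (hη : 0 ≤ η) :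
    (B + (η : 𝕜) • 1).det
      ≤ B.det + ((Fintype.card n * η * (Λ + η) ^ (Fintype.card n - 1) : ℝ) : 𝕜) := by
  rw [hB.1.det_add_smul_one, hB.1.det_eq_prod_eigenvalues, ← RCLike.ofReal_prod,
    ← RCLike.ofReal_prod, ← RCLike.ofReal_add, RCLike.ofReal_le_ofReal]
  exact Finset.univ.prod_add_le_prod_add_card_mul (fun i _ => hB.eigenvalues_nonneg i)
    (fun i _ => hB.1.eigenvalues_le_of_le_smul_one hBΛ i) hη

end Matrix

theorem stmt_5_general {n : ℕ}
    (A B : Matrix (Fin n) (Fin n) ℂ)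
    (δ η Λ : ℝ) (hδ : 0 < δ) (hη0 : 0 ≤ η) (hηδ : η < δ)
    (hAδ : (A - (δ : ℂ) • (1 : Matrix (Fin n) (Fin n) ℂ)).PosSemidef)
    (hAB : (B + (η : ℂ) • (1 : Matrix (Fin n) (Fin n) ℂ) - A).PosSemidef) :
    (B - ((δ - η : ℝ) : ℂ) • (1 : Matrix (Fin n) (Fin n) ℂ)).PosSemidef ∧
    B.PosDef ∧
    A.det.re ≤ (B + (η : ℂ) • (1 : Matrix (Fin n) (Fin n) ℂ)).det.re ∧
    (((Λ : ℂ) • (1 : Matrix (Fin n) (Fin n) ℂ) - B).PosSemidef →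
      (B + (η : ℂ) • (1 : Matrix (Fin n) (Fin n) ℂ)).det.re ≤
          B.det.re + n * η * (Λ + η) ^ (n - 1) ∧
        A.det.re ≤ B.det.re + n * η * (Λ + η) ^ (n - 1)) := by
  have hBδη : (B - ((δ - η : ℝ) : ℂ) • (1 : Matrix (Fin n) (Fin n) ℂ)).PosSemidef := by
    convert hAB.add hAδ using 1
    push_cast
    module
  have hApos : A.PosDef := (posDef_smul_one hδ).of_le (le_iff.mpr hAδ)
  have hBpos : B.PosDef := (posDef_smul_one (sub_pos.mpr hηδ)).of_le (le_iff.mpr hBδη)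
  have hdet : A.det.re ≤ (B + (η : ℂ) • (1 : Matrix (Fin n) (Fin n) ℂ)).det.re :=
    Complex.re_le_re (hApos.det_le_det_of_le (le_iff.mpr hAB))
  refine ⟨hBδη, hBpos, hdet, fun hBΛ => ?_⟩
  have hshift := Complex.re_le_re (hBpos.posSemidef.det_add_smul_one_le (le_iff.mpr hBΛ) hη0)
  simp only [Complex.add_re, Fintype.card_fin] at hshift
  exact ⟨hshift, hdet.trans hshift⟩

/-- Determinant comparison with a small error term: if `A ≥ δ·I` and
`A ≤ B + η·I` with `0 ≤ η < δ`, then `B ≥ (δ-η)·I` (so `B` is positive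
definite) and `det A ≤ det (B + η·I)`; if moreover `B ≤ Λ·I` then
`det (B + η·I) ≤ det B + n·η·(Λ+η)^{n-1}`, hence
`det A ≤ det B + n·η·(Λ+η)^{n-1}`. -/
theorem stmt_5 {n : ℕ} (hn : 1 ≤ n)
    (A B : Matrix (Fin n) (Fin n) ℂ) (hA : A.IsHermitian) (hB : B.IsHermitian)
    (δ η Λ : ℝ) (hδ : 0 < δ) (hη0 : 0 ≤ η) (hηδ : η < δ) (hΛ : 0 < Λ)
    (hAδ : (A - (δ : ℂ) • (1 : Matrix (Fin n) (Fin n) ℂ)).PosSemidef)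
    (hAB : (B + (η : ℂ) • (1 : Matrix (Fin n) (Fin n) ℂ) - A).PosSemidef) :
    (B - ((δ - η : ℝ) : ℂ) • (1 : Matrix (Fin n) (Fin n) ℂ)).PosSemidef ∧
    B.PosDef ∧
    A.det.re ≤ (B + (η : ℂ) • (1 : Matrix (Fin n) (Fin n) ℂ)).det.re ∧
    (((Λ : ℂ) • (1 : Matrix (Fin n) (Fin n) ℂ) - B).PosSemidef →
      (B + (η : ℂ) • (1 : Matrix (Fin n) (Fin n) ℂ)).det.re ≤
          B.det.re + n * η * (Λ + η) ^ (n - 1) ∧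
        A.det.re ≤ B.det.re + n * η * (Λ + η) ^ (n - 1)) :=
  stmt_5_general A B δ η Λ hδ hη0 hηδ hAδ hAB
end
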